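/- For all u, z ∈ ℝ and v > 0, Im(ψ(v+iu) − ψ(−ζ−iz)) = μ(u+z) + (vu − zζ)σ² + R₁(u,v,z) + R₂(u,v,z) + R₃(u,v,z) + R₄(u,v,z), where R₁ is ō(uv); R₂ is ō(z²−u²); R₃ has the same sign as z+u and |R₃| is ō((z+u)²); and R₄ is ō(z). -/

import Mathlib

open MeasureTheory Filter Set Complex
open scoped ENNReal

/-- The Laplace exponent of the spectrally negative Lévy process with triplet `(μ, σ, ν)`. -/
noncomputable def psi (μ σ : ℝ) (ν : Measure ℝ) (l : ℂ) : ℂ :=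
  (μ : ℂ) * l + ((σ : ℂ) ^ 2 / 2) * l ^ 2 +
    ∫ x : ℝ, (Complex.exp (l * (x : ℂ)) - 1 - l * (x : ℂ)) ∂ν

/-- `IsRem R f` : the remainder `R(u,v,z)` is `ō(f(u,v,z))`, i.e. `|R| ≤ C |f|` uniformly over
`u, z ∈ ℝ`, `v > 0`, and `|R|/|f| → 0` as `|f| → ∞`. -/
def IsRem (R f : ℝ → ℝ → ℝ → ℝ) : Prop :=
  (∃ C : ℝ, ∀ (u z : ℝ) (v : ℝ), 0 < v → |R u v z| ≤ C * |f u v z|) ∧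
  (∀ δ : ℝ, 0 < δ → ∃ M : ℝ, 0 < M ∧
    ∀ (u z : ℝ) (v : ℝ), 0 < v → M ≤ |f u v z| → |R u v z| ≤ δ * |f u v z|)

/-!
The imaginary part of `ψ(v+iu) − ψ(−ζ−iz)` is `μ(u+z) + (vu − zζ)σ²` plus the `ν`-integral of
`(e^{vx} − 1) sin ux + (sin ux + sin zx − (u+z)x) + (e^{−ζx} − 1) sin zx`, and sum-to-product
splits the middle term into `2 sin(ax)(cos(bx) − 1) + 2(sin(ax) − ax)` with `a = (u+z)/2`,
`b = (u−z)/2`. With `F` the size of the comparison term (`|uv|`, `|z²−u²| = 4|ab|`, `(z+u)² = 4a²`,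
`|z|`), each of the four integrands is at most a constant times `F · w(x) · min(|x|, 1/s)`, where
`s = √F` and `w(x) = |x|` for the first three and `s = F`, `w(x) = |e^{−ζx} − 1|` for the last.
Assumption 1 makes `w(x)|x|` integrable, so by dominated convergence `∫ w(x) min(|x|, 1/s) dν → 0`
as `s → ∞`, which is the `ō` property. Since `ν` lives on `(−∞, 0)` and `sin t − t` has the sign of
`−t`, the third remainder has the sign of `u + z`.
-/

open scoped Topology

namespace Real

lemma abs_sin_le_min (t : ℝ) : |sin t| ≤ min |t| 1 :=
  le_min abs_sin_le_abs (abs_sin_le_one t)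

lemma abs_exp_sub_one_le_min {t : ℝ} (ht : t ≤ 0) : |exp t - 1| ≤ min |t| 1 := by
  rw [abs_of_nonpos (by simpa using exp_le_one_iff.mpr ht), abs_of_nonpos ht]
  exact le_min (by linarith [add_one_le_exp t]) (by linarith [exp_pos t])

lemma abs_exp_sub_one_le_mul_exp (t : ℝ) : |exp t - 1| ≤ |t| * exp |t| := by
  simpa [← Complex.ofReal_exp, ← Complex.ofReal_one, ← Complex.ofReal_sub] using
    Complex.norm_exp_sub_sum_le_norm_mul_exp (t : ℂ) 1

lemma abs_cos_sub_one_le_min (t : ℝ) : |cos t - 1| ≤ 2 * min |t| 1 := by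
  have h := one_sub_sq_div_two_le_cos (x := t)
  rw [abs_of_nonpos (by linarith [cos_le_one t])]
  rcases le_total |t| 1 with ht | ht
  · rw [min_eq_left ht]
    nlinarith [sq_abs t, abs_nonneg t]
  · rw [min_eq_right ht]
    linarith [neg_one_le_cos t]

lemma abs_sin_sub_self_le (t : ℝ) : |sin t - t| ≤ 2 * (|t| * min |t| 1) := by
  have key : ∀ s, 0 ≤ s → |sin s - s| ≤ 2 * (s * min s 1) := by
    intro s hs
    rw [abs_of_nonpos (by linarith [sin_le hs])]
    rcases le_total s 1 with h | h
    · rw [min_eq_left h]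
      nlinarith [sin_ge_sub_cube hs, mul_nonneg (mul_nonneg hs hs) (sub_nonneg.2 h)]
    · rw [min_eq_right h]
      linarith [neg_one_le_sin s]
  rcases le_total 0 t with ht | ht
  · simpa [abs_of_nonneg ht] using key t ht
  · have := key (-t) (by linarith)
    rwa [sin_neg, show -sin t - -t = -(sin t - t) by ring, abs_neg, ← abs_of_nonpos ht] at this

end Real

lemma Complex.norm_exp_sub_one_sub_le_sq_mul_exp (w : ℂ) :
    ‖cexp w - 1 - w‖ ≤ ‖w‖ ^ 2 * Real.exp ‖w‖ := by
  simpa [Finset.sum_range_succ, sub_sub] using Complex.norm_exp_sub_sum_le_norm_mul_exp w 2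

lemma min_mul_min_le {a b T y : ℝ} (ha : 0 ≤ a) (hb : 0 ≤ b) (hy : 0 ≤ y)
    (hab : a * b ≤ T ^ 2) : min (a * y) 1 * min (b * y) 1 ≤ T * (y * min (T * y) 1) := by
  set p := min (a * y) 1
  set q := min (b * y) 1
  have hp0 : 0 ≤ p := le_min (by positivity) zero_le_one
  have hq0 : 0 ≤ q := le_min (by positivity) zero_le_one
  have hpq : p * q ≤ (T * y) ^ 2 := calc
    p * q ≤ (a * y) * (b * y) :=
      mul_le_mul (min_le_left _ _) (min_le_left _ _) hq0 (by positivity)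
    _ = a * b * y ^ 2 := by ring
    _ ≤ (T * y) ^ 2 := by rw [mul_pow]; gcongr
  rcases le_total (T * y) 1 with h | h
  · rw [min_eq_left h]
    nlinarith
  · rw [min_eq_right h]
    have hpq1 : p * q ≤ 1 := mul_le_one₀ (min_le_right _ _) hq0 (min_le_right _ _)
    nlinarith [mul_nonneg hp0 hq0]

lemma mul_min_inv_eq {s : ℝ} (hs : 0 ≤ s) (y : ℝ) : s * min y s⁻¹ = min (s * y) 1 := by
  rcases hs.eq_or_lt with rfl | hs
  · simp
  · rw [mul_min_of_nonneg _ _ hs.le, mul_inv_cancel₀ hs.ne']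

section TruncatedMoment

variable {ν : Measure ℝ} {w : ℝ → ℝ}

noncomputable def truncatedMoment (ν : Measure ℝ) (w : ℝ → ℝ) (s : ℝ) : ℝ :=
  ∫ x, w x * min |x| s⁻¹ ∂ν

lemma abs_mul_min_inv_le (hw0 : ∀ x, 0 ≤ w x) {s : ℝ} (hs : 0 ≤ s) (x : ℝ) :
    |w x * min |x| s⁻¹| ≤ w x * |x| := by
  rw [abs_of_nonneg (mul_nonneg (hw0 x) (le_min (abs_nonneg x) (inv_nonneg.2 hs)))]
  exact mul_le_mul_of_nonneg_left (min_le_left _ _) (hw0 x)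

variable (hw : Integrable (fun x => w x * |x|) ν) (hwm : AEStronglyMeasurable w ν)
  (hw0 : ∀ x, 0 ≤ w x)
include hw hwm hw0

lemma integrable_mul_min_inv {s : ℝ} (hs : 0 ≤ s) :
    Integrable (fun x => w x * min |x| s⁻¹) ν :=
  hw.mono' (hwm.mul (by fun_prop : Continuous fun x : ℝ => min |x| s⁻¹).aestronglyMeasurable)
    (.of_forall (abs_mul_min_inv_le hw0 hs))

lemma truncatedMoment_le {s : ℝ} (hs : 0 ≤ s) : truncatedMoment ν w s ≤ ∫ x, w x * |x| ∂ν :=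
  integral_mono (integrable_mul_min_inv hw hwm hw0 hs) hw
    fun x => (le_abs_self _).trans (abs_mul_min_inv_le hw0 hs x)

lemma tendsto_truncatedMoment : Tendsto (truncatedMoment ν w) atTop (𝓝 0) := by
  have hlim : ∀ x, Tendsto (fun s : ℝ => w x * min |x| s⁻¹) atTop (𝓝 0) := fun x => by
    simpa using (tendsto_const_nhds (x := |x|)).min tendsto_inv_atTop_zero |>.const_mul (w x)
  have := tendsto_integral_filter_of_dominated_convergence (F := fun s x => w x * min |x| s⁻¹)
    _ (.of_forall fun s =>
      hwm.mul (by fun_prop : Continuous fun x : ℝ => min |x| s⁻¹).aestronglyMeasurable)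
    ((eventually_ge_atTop 0).mono fun s hs => .of_forall (abs_mul_min_inv_le hw0 hs)) hw
    (.of_forall hlim)
  rwa [integral_zero] at this

lemma abs_integral_le_mul_truncatedMoment {φ : ℝ → ℝ} {K s : ℝ} (hs : 0 ≤ s)
    (h : ∀ᵐ x ∂ν, |φ x| ≤ K * (w x * min (s * |x|) 1)) :
    |∫ x, φ x ∂ν| ≤ K * s * truncatedMoment ν w s := by
  have hK : ∀ x, K * (w x * min (s * |x|) 1) = K * s * (w x * min |x| s⁻¹) := fun x => by
    rw [← mul_min_inv_eq hs]; ring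
  calc |∫ x, φ x ∂ν| ≤ ∫ x, K * s * (w x * min |x| s⁻¹) ∂ν :=
        norm_integral_le_of_norm_le (f := φ)
          ((integrable_mul_min_inv hw hwm hw0 hs).const_mul _) (h.mono fun x hx => by rwa [← hK])
    _ = K * s * truncatedMoment ν w s := integral_const_mul _ _

lemma integrable_of_abs_le_mul_min {φ : ℝ → ℝ} {K s : ℝ} (hs : 0 ≤ s)
    (hφ : AEStronglyMeasurable φ ν) (h : ∀ᵐ x ∂ν, |φ x| ≤ K * (w x * min (s * |x|) 1)) :
    Integrable φ ν :=
  ((integrable_mul_min_inv hw hwm hw0 hs).const_mul (K * s)).mono' hφ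
    (h.mono fun x hx => by rwa [mul_assoc K s, mul_left_comm s, mul_min_inv_eq hs])

end TruncatedMoment

lemma isRem_of_abs_le_mul {R f : ℝ → ℝ → ℝ → ℝ} {Φ : ℝ → ℝ} {C : ℝ}
    (hC : ∀ F, 0 ≤ F → Φ F ≤ C) (hΦ : Tendsto Φ atTop (𝓝 0))
    (hR : ∀ u z v, 0 < v → |R u v z| ≤ |f u v z| * Φ |f u v z|) : IsRem R f := by
  refine ⟨⟨C, fun u z v hv => ?_⟩, fun δ hδ => ?_⟩
  · exact (hR u z v hv).trans (by rw [mul_comm C]; gcongr; exact hC _ (abs_nonneg _))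
  · obtain ⟨M, hM⟩ := eventually_atTop.1 (hΦ.eventually (eventually_le_nhds hδ))
    refine ⟨max M 1, by positivity, fun u z v hv hf => (hR u z v hv).trans ?_⟩
    rw [mul_comm δ]
    gcongr
    exact hM _ ((le_max_left _ _).trans hf)

/-- With `F = |f u v z|`, the hypothesis bounds the remainder by `F * truncatedMoment ν w (ρ F)`. -/
lemma isRem_integral_of_abs_le {ν : Measure ℝ} {w : ℝ → ℝ}
    (hw : Integrable (fun x => w x * |x|) ν) (hwm : AEStronglyMeasurable w ν)
    (hw0 : ∀ x, 0 ≤ w x) {κ ρ : ℝ → ℝ} (hρ : Tendsto ρ atTop atTop)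
    (hρ0 : ∀ F, 0 ≤ F → 0 ≤ ρ F) (hκρ : ∀ F, 0 ≤ F → κ F * ρ F = F)
    {φ : ℝ → ℝ → ℝ → ℝ → ℝ} {f : ℝ → ℝ → ℝ → ℝ}
    (h : ∀ u z v, 0 < v → ∀ᵐ x ∂ν,
      |φ u v z x| ≤ κ |f u v z| * (w x * min (ρ |f u v z| * |x|) 1)) :
    IsRem (fun u v z => ∫ x, φ u v z x ∂ν) f :=
  isRem_of_abs_le_mul (fun F hF => truncatedMoment_le hw hwm hw0 (hρ0 F hF))
    ((tendsto_truncatedMoment hw hwm hw0).comp hρ) fun u z v hv => by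
      simpa only [hκρ _ (abs_nonneg _)] using
        abs_integral_le_mul_truncatedMoment hw hwm hw0 (hρ0 _ (abs_nonneg _)) (h u z v hv)

section LevyMeasure

variable {ν : Measure ℝ} {ζ : ℝ}

lemma integrable_of_norm_le_of_ae_neg {E : Type*} [NormedAddCommGroup E] {g : ℝ → E}
    (hν2 : Integrable (fun x : ℝ => x ^ 2) ν)
    (hνexp : IntegrableOn (fun x : ℝ => |x| * Real.exp (-ζ * x)) (Set.Iio (-1 : ℝ)) ν)
    (hneg : ∀ᵐ x ∂ν, x < 0) (hg : AEStronglyMeasurable g ν) {A B : ℝ}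
    (hfar : ∀ x < -1, ‖g x‖ ≤ A * (|x| * Real.exp (-ζ * x) + x ^ 2))
    (hnear : ∀ x, -1 ≤ x → x < 0 → ‖g x‖ ≤ B * x ^ 2) : Integrable g ν := by
  rw [← integrableOn_univ, ← Iio_union_Ici (a := (-1 : ℝ)), integrableOn_union]
  constructor
  · exact ((hνexp.add hν2.integrableOn).const_mul A).mono' hg.restrict
      ((ae_restrict_mem measurableSet_Iio).mono fun x hx => hfar x hx)
  · refine (hν2.const_mul B).integrableOn.mono' hg.restrict ?_
    filter_upwards [ae_restrict_mem measurableSet_Ici, ae_restrict_of_ae hneg] with x h1 h2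
    exact hnear x h1 h2

variable (hν2 : Integrable (fun x : ℝ => x ^ 2) ν)
  (hνexp : IntegrableOn (fun x : ℝ => |x| * Real.exp (-ζ * x)) (Set.Iio (-1 : ℝ)) ν)
  (hneg : ∀ᵐ x ∂ν, x < 0)
include hν2 hνexp hneg

lemma integrable_psi_integrand {l : ℂ} (hl : -ζ ≤ l.re) :
    Integrable (fun x : ℝ => cexp (l * x) - 1 - l * x) ν := by
  refine integrable_of_norm_le_of_ae_neg hν2 hνexp hneg (by fun_prop) (A := 1 + ‖l‖)
    (B := ‖l‖ ^ 2 * Real.exp ‖l‖) (fun x hx => ?_) (fun x hx1 hx0 => ?_)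
  · have hexp : ‖cexp (l * x)‖ ≤ |x| * Real.exp (-ζ * x) := by
      rw [Complex.norm_exp, re_mul_ofReal]
      calc Real.exp (l.re * x) ≤ 1 * Real.exp (-ζ * x) := by
            rw [one_mul]; exact Real.exp_le_exp.2 (by nlinarith)
        _ ≤ |x| * Real.exp (-ζ * x) := by gcongr; rw [abs_of_neg (by linarith)]; linarith
    have hx2 : |x| ≤ x ^ 2 := by rw [← sq_abs]; nlinarith [abs_of_neg (by linarith : x < 0)]
    have hl : ‖l‖ * |x| ≤ ‖l‖ * (|x| * Real.exp (-ζ * x) + x ^ 2) := by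
      gcongr; nlinarith [abs_nonneg x, Real.exp_pos (-ζ * x)]
    calc ‖cexp (l * x) - 1 - l * x‖ ≤ ‖cexp (l * x)‖ + ‖(1 : ℂ)‖ + ‖l * x‖ :=
          norm_sub_le_of_le (norm_sub_le _ _) le_rfl
      _ = ‖cexp (l * x)‖ + 1 + ‖l‖ * |x| := by simp
      _ ≤ (1 + ‖l‖) * (|x| * Real.exp (-ζ * x) + x ^ 2) := by nlinarith
  · have hlx : ‖l * x‖ ≤ ‖l‖ := by
      simpa using mul_le_mul_of_nonneg_left (abs_le.2 ⟨hx1, by linarith⟩) (norm_nonneg l)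
    calc ‖cexp (l * x) - 1 - l * x‖ ≤ ‖l * x‖ ^ 2 * Real.exp ‖l * x‖ :=
          Complex.norm_exp_sub_one_sub_le_sq_mul_exp _
      _ ≤ ‖l * x‖ ^ 2 * Real.exp ‖l‖ := by gcongr
      _ = ‖l‖ ^ 2 * Real.exp ‖l‖ * x ^ 2 := by simp [mul_pow]; ring

lemma integrable_abs_exp_sub_one_mul_abs :
    Integrable (fun x => |Real.exp (-ζ * x) - 1| * |x|) ν := by
  refine integrable_of_norm_le_of_ae_neg hν2 hνexp hneg (by fun_prop) (A := 1)
    (B := |ζ| * Real.exp |ζ|) (fun x hx => ?_) (fun x hx1 hx0 => ?_)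
  · have hx2 : |x| ≤ x ^ 2 := by rw [← sq_abs]; nlinarith [abs_of_neg (by linarith : x < 0)]
    have he : |Real.exp (-ζ * x) - 1| ≤ Real.exp (-ζ * x) + 1 :=
      (abs_sub _ _).trans (by simp [abs_of_pos (Real.exp_pos _)])
    rw [Real.norm_eq_abs, abs_of_nonneg (by positivity), one_mul]
    nlinarith [abs_nonneg x]
  · have hx : |x| ≤ 1 := abs_le.2 ⟨hx1, by linarith⟩
    have he : |Real.exp (-ζ * x) - 1| ≤ |ζ| * |x| * Real.exp |ζ| :=
      (Real.abs_exp_sub_one_le_mul_exp _).trans (by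
        rw [abs_mul, abs_neg]; gcongr; exact mul_le_of_le_one_right (abs_nonneg ζ) hx)
    rw [Real.norm_eq_abs, abs_of_nonneg (by positivity), ← sq_abs x]
    nlinarith [abs_nonneg x]

end LevyMeasure

section Remainders

variable (ν : Measure ℝ) (ζ : ℝ)

noncomputable def rem₁ (u v _z : ℝ) : ℝ := ∫ x, (Real.exp (v * x) - 1) * Real.sin (u * x) ∂ν

noncomputable def rem₂ (u _v z : ℝ) : ℝ :=
  ∫ x, 2 * (Real.sin ((u + z) / 2 * x) * (Real.cos ((u - z) / 2 * x) - 1)) ∂ν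

noncomputable def rem₃ (u _v z : ℝ) : ℝ :=
  ∫ x, 2 * (Real.sin ((u + z) / 2 * x) - (u + z) / 2 * x) ∂ν

noncomputable def rem₄ (_u _v z : ℝ) : ℝ :=
  ∫ x, (Real.exp (-ζ * x) - 1) * Real.sin (z * x) ∂ν

end Remainders

section PointwiseBounds

variable {u v a b T x : ℝ}

lemma abs_exp_sub_one_mul_sin_le_sqrt (hx : x ≤ 0) (hv : 0 ≤ v) :
    |(Real.exp (v * x) - 1) * Real.sin (u * x)| ≤
      √|u * v| * (|x| * min (√|u * v| * |x|) 1) := calc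
  _ ≤ min (v * |x|) 1 * min (|u| * |x|) 1 := by
    rw [abs_mul]
    gcongr
    · simpa [abs_mul, abs_of_nonneg hv] using
        Real.abs_exp_sub_one_le_min (mul_nonpos_of_nonneg_of_nonpos hv hx)
    · simpa [abs_mul] using Real.abs_sin_le_min (u * x)
  _ ≤ _ := min_mul_min_le hv (abs_nonneg u) (abs_nonneg x)
    (by rw [Real.sq_sqrt (abs_nonneg _), abs_mul, abs_of_nonneg hv, mul_comm])

lemma abs_two_mul_sin_mul_cos_sub_one_le (hT : |a * b| ≤ T ^ 2) :
    |2 * (Real.sin (a * x) * (Real.cos (b * x) - 1))| ≤ T * (4 * |x| * min (T * |x|) 1) := calc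
  _ ≤ 2 * (min (|a| * |x|) 1 * (2 * min (|b| * |x|) 1)) := by
    rw [abs_mul, abs_two, abs_mul]
    gcongr
    · simpa [abs_mul] using Real.abs_sin_le_min (a * x)
    · simpa [abs_mul] using Real.abs_cos_sub_one_le_min (b * x)
  _ = 4 * (min (|a| * |x|) 1 * min (|b| * |x|) 1) := by ring
  _ ≤ 4 * (T * (|x| * min (T * |x|) 1)) := mul_le_mul_of_nonneg_left
    (min_mul_min_le (abs_nonneg a) (abs_nonneg b) (abs_nonneg x) (by rwa [← abs_mul])) four_pos.le
  _ = _ := by ring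

lemma abs_two_mul_sin_sub_self_le (hT : |a| ≤ T) :
    |2 * (Real.sin (a * x) - a * x)| ≤ T * (4 * |x| * min (T * |x|) 1) := calc
  _ ≤ 2 * (2 * (|a| * |x| * min (|a| * |x|) 1)) := by
    rw [abs_mul, abs_two]
    gcongr
    simpa [abs_mul] using Real.abs_sin_sub_self_le (a * x)
  _ ≤ 2 * (2 * (T * |x| * min (T * |x|) 1)) := by
    gcongr
    exact mul_nonneg ((abs_nonneg a).trans hT) (abs_nonneg x)
  _ = _ := by ring

lemma abs_exp_sub_one_mul_sin_le_min (ζ z x : ℝ) :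
    |(Real.exp (-ζ * x) - 1) * Real.sin (z * x)| ≤
      |Real.exp (-ζ * x) - 1| * min (|z| * |x|) 1 := by
  rw [abs_mul]
  gcongr
  simpa [abs_mul] using Real.abs_sin_le_min (z * x)

lemma mul_sin_sub_self_nonneg (hx : x ≤ 0) : 0 ≤ a * (Real.sin (a * x) - a * x) := by
  rcases le_total 0 a with ha | ha
  · exact mul_nonneg ha (sub_nonneg.2 (Real.le_sin (mul_nonpos_of_nonneg_of_nonpos ha hx)))
  · exact mul_nonneg_of_nonpos_of_nonpos ha
      (sub_nonpos.2 (Real.sin_le (mul_nonneg_of_nonpos_of_nonpos ha hx)))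

lemma abs_half_add_mul_half_sub_le (u z : ℝ) :
    |(u + z) / 2 * ((u - z) / 2)| ≤ √|z ^ 2 - u ^ 2| ^ 2 := by
  rw [Real.sq_sqrt (abs_nonneg _),
    show (u + z) / 2 * ((u - z) / 2) = -(z ^ 2 - u ^ 2) / 4 by ring, abs_div, abs_neg]
  linarith [abs_nonneg (z ^ 2 - u ^ 2), abs_of_pos (four_pos : (0 : ℝ) < 4)]

lemma abs_half_add_le (u z : ℝ) : |(u + z) / 2| ≤ √|(z + u) ^ 2| := by
  rw [abs_sq, Real.sqrt_sq_eq_abs, abs_div, abs_two, add_comm z]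
  linarith [abs_nonneg (u + z)]

end PointwiseBounds

section Remainders

variable {ν : Measure ℝ} (hν2 : Integrable (fun x : ℝ => x ^ 2) ν)
include hν2

lemma integrable_const_mul_abs_mul_abs (c : ℝ) : Integrable (fun x => c * |x| * |x|) ν :=
  (hν2.const_mul c).congr (.of_forall fun x => by simp [mul_assoc, sq])

lemma integrable_of_abs_le_sqrt {φ : ℝ → ℝ} {F c : ℝ} (hc : 0 ≤ c)
    (hφ : AEStronglyMeasurable φ ν) (h : ∀ᵐ x ∂ν, |φ x| ≤ √F * (c * |x| * min (√F * |x|) 1)) :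
    Integrable φ ν :=
  integrable_of_abs_le_mul_min (integrable_const_mul_abs_mul_abs hν2 c) (by fun_prop)
    (fun x => by positivity) (Real.sqrt_nonneg F) hφ h

lemma isRem_integral_of_abs_le_sqrt {φ : ℝ → ℝ → ℝ → ℝ → ℝ} {f : ℝ → ℝ → ℝ → ℝ} {c : ℝ}
    (hc : 0 ≤ c) (h : ∀ u z v, 0 < v → ∀ᵐ x ∂ν,
      |φ u v z x| ≤ √|f u v z| * (c * |x| * min (√|f u v z| * |x|) 1)) :
    IsRem (fun u v z => ∫ x, φ u v z x ∂ν) f :=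
  isRem_integral_of_abs_le (integrable_const_mul_abs_mul_abs hν2 c) (by fun_prop)
    (fun x => by positivity) Real.tendsto_sqrt_atTop (fun F _ => Real.sqrt_nonneg F)
    (fun F hF => Real.mul_self_sqrt hF) h

lemma isRem_rem₁ (hneg : ∀ᵐ x ∂ν, x < 0) : IsRem (rem₁ ν) (fun u v _ => u * v) :=
  isRem_integral_of_abs_le_sqrt hν2 zero_le_one fun u _ _ hv =>
    hneg.mono fun x hx => by simpa using abs_exp_sub_one_mul_sin_le_sqrt (u := u) hx.le hv.le

lemma isRem_rem₂ : IsRem (rem₂ ν) (fun u _ z => z ^ 2 - u ^ 2) :=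
  isRem_integral_of_abs_le_sqrt hν2 four_pos.le fun u z _ _ =>
    .of_forall fun _ => abs_two_mul_sin_mul_cos_sub_one_le (abs_half_add_mul_half_sub_le u z)

lemma isRem_rem₃ : IsRem (rem₃ ν) (fun u _ z => (z + u) ^ 2) :=
  isRem_integral_of_abs_le_sqrt hν2 four_pos.le fun u z _ _ =>
    .of_forall fun _ => abs_two_mul_sin_sub_self_le (abs_half_add_le u z)

end Remainders

lemma isRem_rem₄ {ν : Measure ℝ} {ζ : ℝ}
    (hw : Integrable (fun x => |Real.exp (-ζ * x) - 1| * |x|) ν) :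
    IsRem (rem₄ ν ζ) (fun _ _ z => z) :=
  isRem_integral_of_abs_le (κ := fun _ => 1) (ρ := id) hw (by fun_prop) (fun _ => abs_nonneg _)
    tendsto_id (fun _ hF => hF) (fun _ _ => one_mul _) fun _ z _ _ => .of_forall fun x =>
      (abs_exp_sub_one_mul_sin_le_min ζ z x).trans_eq (one_mul _).symm

lemma rem₃_mul_nonneg {ν : Measure ℝ} (hneg : ∀ᵐ x ∂ν, x < 0) (u v z : ℝ) :
    0 ≤ (z + u) * rem₃ ν u v z := by
  rw [rem₃, ← integral_const_mul]
  refine integral_nonneg_of_ae (hneg.mono fun x hx => ?_)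
  have := mul_sin_sub_self_nonneg (a := (u + z) / 2) hx.le
  simp only [Pi.zero_apply]
  linarith

lemma im_psi_integrand (a b x : ℝ) :
    (cexp ((a + I * b) * x) - 1 - (a + I * b) * x).im =
      Real.exp (a * x) * Real.sin (b * x) - b * x := by
  simp [Complex.exp_im]

lemma im_psi (μ σ a b : ℝ) {ν : Measure ℝ}
    (h : Integrable (fun x : ℝ => cexp ((a + I * b) * x) - 1 - (a + I * b) * x) ν) :
    (psi μ σ ν (a + I * b)).im =
      μ * b + σ ^ 2 * (a * b) + ∫ x, (Real.exp (a * x) * Real.sin (b * x) - b * x) ∂ν := by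
  have hI : (∫ x : ℝ, cexp ((a + I * b) * x) - 1 - (a + I * b) * x ∂ν).im =
      ∫ x : ℝ, (cexp ((a + I * b) * x) - 1 - (a + I * b) * x).im ∂ν := (integral_im h).symm
  rw [psi, add_im, add_im, hI]
  simp only [im_psi_integrand]
  simp [sq]
  ring

lemma im_integrand_sub_eq (u v z ζ x : ℝ) :
    (Real.exp (v * x) * Real.sin (u * x) - u * x)
        - (Real.exp (-ζ * x) * Real.sin (-z * x) - -z * x) =
      (Real.exp (v * x) - 1) * Real.sin (u * x)
        + 2 * (Real.sin ((u + z) / 2 * x) * (Real.cos ((u - z) / 2 * x) - 1))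
        + 2 * (Real.sin ((u + z) / 2 * x) - (u + z) / 2 * x)
        + (Real.exp (-ζ * x) - 1) * Real.sin (z * x) := by
  have h := Real.sin_add_sin (u * x) (z * x)
  rw [show (u * x + z * x) / 2 = (u + z) / 2 * x by ring,
    show (u * x - z * x) / 2 = (u - z) / 2 * x by ring] at h
  rw [neg_mul z, Real.sin_neg]
  linear_combination h

lemma im_psi_sub_psi (μ σ : ℝ) {ν : Measure ℝ} {ζ : ℝ} (hζ : 0 ≤ ζ)
    (hν2 : Integrable (fun x : ℝ => x ^ 2) ν)
    (hνexp : IntegrableOn (fun x : ℝ => |x| * Real.exp (-ζ * x)) (Set.Iio (-1 : ℝ)) ν)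
    (hneg : ∀ᵐ x ∂ν, x < 0) {u v z : ℝ} (hv : 0 < v) :
    (psi μ σ ν ((v : ℂ) + Complex.I * (u : ℂ)) - psi μ σ ν (-(ζ : ℂ) - Complex.I * (z : ℂ))).im
      = μ * (u + z) + (v * u - z * ζ) * σ ^ 2
        + rem₁ ν u v z + rem₂ ν u v z + rem₃ ν u v z + rem₄ ν ζ u v z := by
  have h₁ := integrable_psi_integrand hν2 hνexp hneg (l := v + I * u) (by simp; linarith)
  have h₂ := integrable_psi_integrand hν2 hνexp hneg (l := (-ζ : ℝ) + I * (-z : ℝ)) (by simp)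
  have i₁ : Integrable (fun x => (Real.exp (v * x) - 1) * Real.sin (u * x)) ν :=
    integrable_of_abs_le_sqrt hν2 zero_le_one (F := |u * v|) (by fun_prop)
      (hneg.mono fun x hx => by simpa using abs_exp_sub_one_mul_sin_le_sqrt (u := u) hx.le hv.le)
  have i₂ : Integrable
      (fun x => 2 * (Real.sin ((u + z) / 2 * x) * (Real.cos ((u - z) / 2 * x) - 1))) ν :=
    integrable_of_abs_le_sqrt hν2 four_pos.le (by fun_prop) (.of_forall fun _ =>
      abs_two_mul_sin_mul_cos_sub_one_le (abs_half_add_mul_half_sub_le u z))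
  have i₃ : Integrable (fun x => 2 * (Real.sin ((u + z) / 2 * x) - (u + z) / 2 * x)) ν :=
    integrable_of_abs_le_sqrt hν2 four_pos.le (F := |(z + u) ^ 2|) (by fun_prop)
      (.of_forall fun _ => abs_two_mul_sin_sub_self_le (abs_half_add_le u z))
  have i₄ : Integrable (fun x => (Real.exp (-ζ * x) - 1) * Real.sin (z * x)) ν :=
    integrable_of_abs_le_mul_min (K := 1) (integrable_abs_exp_sub_one_mul_abs hν2 hνexp hneg)
      (by fun_prop) (fun _ => abs_nonneg _) (abs_nonneg z) (by fun_prop)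
      (.of_forall fun x => (abs_exp_sub_one_mul_sin_le_min ζ z x).trans_eq (one_mul _).symm)
  have hdiff : ∫ x, (Real.exp (v * x) * Real.sin (u * x) - u * x) ∂ν
      - ∫ x, (Real.exp (-ζ * x) * Real.sin (-z * x) - -z * x) ∂ν
      = rem₁ ν u v z + rem₂ ν u v z + rem₃ ν u v z + rem₄ ν ζ u v z := by
    rw [← integral_sub (h₁.im.congr (.of_forall fun x => im_psi_integrand v u x))
      (h₂.im.congr (.of_forall fun x => im_psi_integrand (-ζ) (-z) x))]
    simp only [im_integrand_sub_eq]
    rw [integral_add (by exact (i₁.add i₂).add i₃) i₄, integral_add (by exact i₁.add i₂) i₃,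
      integral_add i₁ i₂]
    rfl
  have hl₂ : -(ζ : ℂ) - I * z = ((-ζ : ℝ) : ℂ) + I * ((-z : ℝ) : ℂ) := by push_cast; ring
  rw [sub_im, hl₂, im_psi μ σ v u h₁, im_psi μ σ (-ζ) (-z) h₂]
  linear_combination hdiff

theorem stmt_1_general (μ σ ζ : ℝ) (ν : Measure ℝ)
    (hζ : 0 ≤ ζ)
    (hνsupp : ν (Set.Ici (0 : ℝ)) = 0)
    (hν2 : Integrable (fun x : ℝ => x ^ 2) ν)
    (hνexp : IntegrableOn (fun x : ℝ => |x| * Real.exp (-ζ * x)) (Set.Iio (-1 : ℝ)) ν) :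
    ∃ R₁ R₂ R₃ R₄ : ℝ → ℝ → ℝ → ℝ,
      IsRem R₁ (fun u v _ => u * v) ∧
      IsRem R₂ (fun u _ z => z ^ 2 - u ^ 2) ∧
      (∀ (u z : ℝ) (v : ℝ), 0 < v → 0 ≤ (z + u) * R₃ u v z) ∧
      IsRem R₃ (fun u _ z => (z + u) ^ 2) ∧
      IsRem R₄ (fun _ _ z => z) ∧
      ∀ (u z : ℝ) (v : ℝ), 0 < v →
        (psi μ σ ν ((v : ℂ) + Complex.I * (u : ℂ)) -
            psi μ σ ν (-(ζ : ℂ) - Complex.I * (z : ℂ))).im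
          = μ * (u + z) + (v * u - z * ζ) * σ ^ 2
            + R₁ u v z + R₂ u v z + R₃ u v z + R₄ u v z := by
  have hneg : ∀ᵐ x ∂ν, x < 0 :=
    (measure_eq_zero_iff_ae_notMem.1 hνsupp).mono fun x hx => not_le.1 hx
  exact ⟨rem₁ ν, rem₂ ν, rem₃ ν, rem₄ ν ζ, isRem_rem₁ hν2 hneg, isRem_rem₂ hν2,
    fun u z v _ => rem₃_mul_nonneg hneg u v z, isRem_rem₃ hν2,
    isRem_rem₄ (integrable_abs_exp_sub_one_mul_abs hν2 hνexp hneg),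
    fun u z v hv => im_psi_sub_psi μ σ hζ hν2 hνexp hneg hv⟩

/-- Lemma 2: alternative expansion of `Im(ψ(v+iu) − ψ(−ζ−iz))`. -/
theorem stmt_1 (μ σ ζ : ℝ) (ν : Measure ℝ) [SigmaFinite ν]
    (hσ : 0 < σ) (hζ : 0 ≤ ζ)
    (hνsupp : ν (Set.Ici (0 : ℝ)) = 0)
    (hν2 : Integrable (fun x : ℝ => x ^ 2) ν)
    (hνexp : IntegrableOn (fun x : ℝ => |x| * Real.exp (-ζ * x)) (Set.Iio (-1 : ℝ)) ν) :
    ∃ R₁ R₂ R₃ R₄ : ℝ → ℝ → ℝ → ℝ,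
      IsRem R₁ (fun u v _ => u * v) ∧
      IsRem R₂ (fun u _ z => z ^ 2 - u ^ 2) ∧
      (∀ (u z : ℝ) (v : ℝ), 0 < v → 0 ≤ (z + u) * R₃ u v z) ∧
      IsRem R₃ (fun u _ z => (z + u) ^ 2) ∧
      IsRem R₄ (fun _ _ z => z) ∧
      ∀ (u z : ℝ) (v : ℝ), 0 < v →
        (psi μ σ ν ((v : ℂ) + Complex.I * (u : ℂ)) -
            psi μ σ ν (-(ζ : ℂ) - Complex.I * (z : ℂ))).im
          = μ * (u + z) + (v * u - z * ζ) * σ ^ 2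
            + R₁ u v z + R₂ u v z + R₃ u v z + R₄ u v z :=
  stmt_1_general μ σ ζ ν hζ hνsupp hν2 hνexp
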